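/- arXiv:1904.01839 — 2 statements merged into one kernel-verified Lean document; each statement's English description precedes it below -/
import Mathlib

section
/- Let τ ∈ [0,1] and let ŵ : [0,∞) → ℝ⁸ be twice continuously differentiable with ŵᵢ(x) ≥ 0 for every i and every x ≥ 0, Dᵢŵᵢ″(x) + F^τᵢ(ŵ(x)) = 0 for all x ≥ 0, ŵ′(0) = 0 and ŵ(x) → 0 as x → +∞. Then either ŵ is identically zero, or ŵᵢ(x) > 0 for every i ∈ {1,…,8} and every x ≥ 0. -/
open Filter Topology Matrix
open scoped ENNReal

noncomputable section

/-- The positive parameters of the blood coagulation system.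
Indices `0..7` of `k`, `h`, `D` correspond to `k₁..k₈`, `h₁..h₈`, `D₁..D₈`;
indices `2..7` of `ρ` correspond to `ρ₃..ρ₈` (so `T⁰ = ρ₈ = ρ 7`). -/
structure Params where
  k : Fin 8 → ℝ
  kb6 : ℝ
  kb8 : ℝ
  h : Fin 8 → ℝ
  ρ : Fin 8 → ℝ
  D : Fin 8 → ℝ

/-- All parameters are positive (`ρ i` only for the meaningful indices `i ≥ 2`). -/
def Params.Pos (p : Params) : Prop :=
  (∀ i, 0 < p.k i) ∧ 0 < p.kb6 ∧ 0 < p.kb8 ∧ (∀ i, 0 < p.h i) ∧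
    (∀ i : Fin 8, 2 ≤ (i : ℕ) → 0 < p.ρ i) ∧ (∀ i, 0 < p.D i)

/-- The reaction terms `F = (F₁,…,F₈)` (component `i-1` is `Fᵢ`, `v (i-1)` is `vᵢ`). -/
def Fvec (p : Params) (v : Fin 8 → ℝ) : Fin 8 → ℝ :=
  ![p.k 0 * v 2 * v 5 - p.h 0 * v 0,
    p.k 1 * v 3 * v 4 - p.h 1 * v 1,
    p.k 2 * v 7 * (p.ρ 2 - v 2) - p.h 2 * v 2,
    p.k 3 * v 7 * (p.ρ 3 - v 3) - p.h 3 * v 3,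
    p.k 4 * v 6 * (p.ρ 4 - v 4) - p.h 4 * v 4,
    (p.k 5 * v 4 + p.kb6 * v 1) * (p.ρ 5 - v 5) - p.h 5 * v 5,
    p.k 6 * v 7 * (p.ρ 6 - v 6) - p.h 6 * v 6,
    (p.k 7 * v 5 + p.kb8 * v 0) * (p.ρ 7 - v 7) - p.h 7 * v 7]

def phi3 (p : Params) (T : ℝ) : ℝ := p.k 2 * p.ρ 2 * T / (p.k 2 * T + p.h 2)

def phi4 (p : Params) (T : ℝ) : ℝ := p.k 3 * p.ρ 3 * T / (p.k 3 * T + p.h 3)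

def phi7 (p : Params) (T : ℝ) : ℝ := p.k 6 * p.ρ 6 * T / (p.k 6 * T + p.h 6)

def phi5 (p : Params) (T : ℝ) : ℝ :=
  p.k 4 * p.ρ 4 * phi7 p T / (p.k 4 * phi7 p T + p.h 4)

def phi2 (p : Params) (T : ℝ) : ℝ := p.k 1 / p.h 1 * (phi4 p T * phi5 p T)

def phi6 (p : Params) (T : ℝ) : ℝ :=
  p.ρ 5 * (p.k 5 * phi5 p T + p.kb6 * phi2 p T) /
    (p.k 5 * phi5 p T + p.kb6 * phi2 p T + p.h 5)

def phi1 (p : Params) (T : ℝ) : ℝ := p.k 0 / p.h 0 * (phi3 p T * phi6 p T)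

/-- `P(T) = (k₈φ₆(T) + k̄₈φ₁(T))(T⁰ − T) − h₈T`. -/
def Ppoly (p : Params) (T : ℝ) : ℝ :=
  (p.k 7 * phi6 p T + p.kb8 * phi1 p T) * (p.ρ 7 - T) - p.h 7 * T

/-- The vector `(φ₁(T),…,φ₇(T),T)`; `phivec p T̄ = w̄`, `phivec p T⁻ = w⁻`. -/
def phivec (p : Params) (T : ℝ) : Fin 8 → ℝ :=
  ![phi1 p T, phi2 p T, phi3 p T, phi4 p T, phi5 p T, phi6 p T, phi7 p T, T]

/-- Condition (P): `P` has exactly the three nonnegative zeros `0 < T̄ < T⁻`, with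
`P′(0) < 0`, `P′(T̄) > 0`, `P′(T⁻) < 0`. -/
def CondP (p : Params) (Tb Tm : ℝ) : Prop :=
  0 < Tb ∧ Tb < Tm ∧
    (∀ T : ℝ, 0 ≤ T → (Ppoly p T = 0 ↔ T = 0 ∨ T = Tb ∨ T = Tm)) ∧
    deriv (Ppoly p) 0 < 0 ∧ 0 < deriv (Ppoly p) Tb ∧ deriv (Ppoly p) Tm < 0

/-- `g` is smooth, nonnegative on `[0,∞)`, with support inside `(T̄, T⁻)`. -/
def GoodG (Tb Tm : ℝ) (g : ℝ → ℝ) : Prop :=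
  ContDiff ℝ (⊤ : ℕ∞) g ∧ (∀ s : ℝ, 0 ≤ s → 0 ≤ g s) ∧ tsupport g ⊆ Set.Ioo Tb Tm

/-- The homotopy `F^τ`: components `1..7` are those of `F` and
`F^τ₈(v) = α^τ F₈(v) + β^τ P(v₈) + γ^τ g(v₈)`. -/
def Ftau (p : Params) (τ₁ : ℝ) (g : ℝ → ℝ) (τ : ℝ) (v : Fin 8 → ℝ) : Fin 8 → ℝ :=
  fun i =>
    if i = 7 then
      (if τ < τ₁ then 1 else (1 - τ) / (1 - τ₁)) * Fvec p v 7 +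
        (if τ < τ₁ then 0 else (τ - τ₁) / (1 - τ₁)) * Ppoly p (v 7) +
        (if τ < τ₁ then τ else τ₁) * g (v 7)
    else Fvec p v i

/-- The set `𝒞 = {v ∈ ℝ⁸ : vᵢ ≥ 0 for all i, vᵢ ≤ ρᵢ for i = 3,…,8}`. -/
def CSet (p : Params) : Set (Fin 8 → ℝ) :=
  {v | (∀ i, 0 ≤ v i) ∧ ∀ i : Fin 8, 2 ≤ (i : ℕ) → v i ≤ p.ρ i}

/-- The partial derivative `∂FFᵢ/∂vⱼ` at `v`. -/
def pd (FF : (Fin 8 → ℝ) → Fin 8 → ℝ) (i j : Fin 8) (v : Fin 8 → ℝ) : ℝ :=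
  deriv (fun t => FF (Function.update v j t) i) (v j)

/-- The Jacobian matrix of `FF` at `v`. -/
def Jac (FF : (Fin 8 → ℝ) → Fin 8 → ℝ) (v : Fin 8 → ℝ) : Matrix (Fin 8) (Fin 8) ℝ :=
  fun i j => pd FF i j v

/-- `lam ∈ ℂ` is an eigenvalue of the real matrix `J`. -/
def IsEig (J : Matrix (Fin 8) (Fin 8) ℝ) (lam : ℂ) : Prop :=
  ∃ x : Fin 8 → ℂ, x ≠ 0 ∧ (J.map Complex.ofReal) *ᵥ x = lam • x

/-- A pulse for the reaction term `FF`: a `C²` decreasing positive solution of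
`D w″ + FF(w) = 0` on `[0,∞)` with `w′(0) = 0` and `w(+∞) = 0`. -/
def IsPulse (p : Params) (FF : (Fin 8 → ℝ) → Fin 8 → ℝ) (w : ℝ → Fin 8 → ℝ) : Prop :=
  (∀ i, ContDiff ℝ 2 fun x => w x i) ∧
    (∀ i : Fin 8, ∀ x : ℝ, 0 ≤ x →
      p.D i * deriv (deriv (fun y => w y i)) x + FF (w x) i = 0) ∧
    (∀ i, deriv (fun y => w y i) 0 = 0) ∧
    (∀ i, Tendsto (fun x => w x i) atTop (𝓝 0)) ∧
    (∀ i : Fin 8, ∀ x : ℝ, 0 < x → deriv (fun y => w y i) x < 0)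

/-- A travelling wave for `FF` with speed `c`, connecting `wm` (at `−∞`) to `0` (at `+∞`). -/
def IsWave (p : Params) (FF : (Fin 8 → ℝ) → Fin 8 → ℝ) (wm : Fin 8 → ℝ) (c : ℝ)
    (u : ℝ → Fin 8 → ℝ) : Prop :=
  (∀ i, ContDiff ℝ 2 fun x => u x i) ∧
    (∀ i : Fin 8, ∀ x : ℝ,
      p.D i * deriv (deriv (fun y => u y i)) x + c * deriv (fun y => u y i) x +
        FF (u x) i = 0) ∧
    (∀ i, Tendsto (fun x => u x i) atBot (𝓝 (wm i))) ∧
    (∀ i, Tendsto (fun x => u x i) atTop (𝓝 0))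

/-- The weighted function `x ↦ μ(x)·z(x)` with `μ(x) = √(1+x²)`. -/
def wtd (z : ℝ → Fin 8 → ℝ) : ℝ → Fin 8 → ℝ := fun x => Real.sqrt (1 + x ^ 2) • z x

/-- The weighted Hölder norm `‖z‖_{E¹_μ}`, valued in `ℝ≥0∞`
(the norm on `ℝ⁸ = Fin 8 → ℝ` is the maximum norm). -/
def E1norm (α : ℝ) (z : ℝ → Fin 8 → ℝ) : ℝ≥0∞ :=
  (⨆ x ∈ Set.Ici (0 : ℝ), ENNReal.ofReal
      (‖wtd z x‖ + ‖deriv (wtd z) x‖ + ‖deriv (deriv (wtd z)) x‖)) +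
    ⨆ x ∈ Set.Ici (0 : ℝ), ⨆ y ∈ Set.Ici (0 : ℝ), ⨆ _ : x ≠ y,
      ENNReal.ofReal (‖deriv (deriv (wtd z)) x - deriv (deriv (wtd z)) y‖ / |x - y| ^ α)

/-- A solution of the scalar pulse problem `D₈T″ + P(T) + τ₁g(T) = 0` on `[0,∞)`,
`T′(0) = 0`, `T(+∞) = 0`, `T′ < 0` on `(0,∞)`. -/
def ScalarPulse (p : Params) (τ₁ : ℝ) (g : ℝ → ℝ) (T : ℝ → ℝ) : Prop :=
  ContDiff ℝ 2 T ∧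
    (∀ x : ℝ, 0 ≤ x → p.D 7 * deriv (deriv T) x + Ppoly p (T x) + τ₁ * g (T x) = 0) ∧
    deriv T 0 = 0 ∧ Tendsto T atTop (𝓝 0) ∧ ∀ x : ℝ, 0 < x → deriv T x < 0

lemma aux_bits {u : ℝ → ℝ} (hu : ContDiff ℝ 2 u) :
    Differentiable ℝ u ∧ Differentiable ℝ (deriv u) ∧ Continuous (deriv (deriv u)) := by
  have h1 : ContDiff ℝ ((1:ℕ)+1) u := by exact_mod_cast hu
  obtain ⟨hd, -, hc⟩ := contDiff_succ_iff_deriv.mp h1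
  have h2 : ContDiff ℝ ((0:ℕ)+1) (deriv u) := by exact_mod_cast hc
  obtain ⟨hd2, -, hc2⟩ := contDiff_succ_iff_deriv.mp h2
  exact ⟨hd, hd2, hc2.continuous⟩

lemma zero_on_interval (c : ℝ) (hc : 0 ≤ c) (u : ℝ → ℝ) (hu : ContDiff ℝ 2 u)
    (a b : ℝ) (hab : a ≤ b) (hlen : c * (b - a) ^ 2 ≤ 1 / 2)
    (hnn : ∀ x ∈ Set.Icc a b, 0 ≤ u x)
    (hineq : ∀ x ∈ Set.Icc a b, deriv (deriv u) x ≤ c * u x)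
    (ha0 : u a = 0) (ha1 : deriv u a = 0) :
    ∀ x ∈ Set.Icc a b, u x = 0 := by
  obtain ⟨hd1, hd2, hcont⟩ := aux_bits hu
  obtain ⟨x₁, hx₁, hmax⟩ := isCompact_Icc.exists_isMaxOn ⟨a, le_refl a, hab⟩
    hd1.continuous.continuousOn
  set M := u x₁ with hMdef
  have hmax' : ∀ y ∈ Set.Icc a b, u y ≤ M := hmax
  have hM0 : 0 ≤ M := ha0 ▸ hmax' a ⟨le_refl a, hab⟩
  have hcM : 0 ≤ c * M := mul_nonneg hc hM0
  have claim1 : ∀ x ∈ Set.Icc a b, deriv u x ≤ c * M * (x - a) := by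
    intro x hx
    have hax : a ≤ x := hx.1
    have hFTC : ∫ s in a..x, deriv (deriv u) s = deriv u x - deriv u a :=
      intervalIntegral.integral_deriv_eq_sub (fun y _ => hd2 y)
        (hcont.intervalIntegrable a x)
    have hmono : ∫ s in a..x, deriv (deriv u) s ≤ ∫ _s in a..x, c * M := by
      apply intervalIntegral.integral_mono_on hax (hcont.intervalIntegrable a x)
        intervalIntegrable_const
      intro s hs
      have hs' : s ∈ Set.Icc a b := ⟨hs.1, hs.2.trans hx.2⟩
      calc deriv (deriv u) s ≤ c * u s := hineq s hs'
        _ ≤ c * M := by nlinarith [hmax' s hs']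
    rw [hFTC, intervalIntegral.integral_const, smul_eq_mul, ha1] at hmono
    nlinarith [hmono]
  have claim2 : M ≤ c * M * (b - a) ^ 2 := by
    have hax : a ≤ x₁ := hx₁.1
    have hFTC : ∫ s in a..x₁, deriv u s = u x₁ - u a :=
      intervalIntegral.integral_deriv_eq_sub (fun y _ => hd1 y)
        (hd2.continuous.intervalIntegrable a x₁)
    have hmono : ∫ s in a..x₁, deriv u s ≤ ∫ _s in a..x₁, c * M * (b - a) := by
      apply intervalIntegral.integral_mono_on hax (hd2.continuous.intervalIntegrable a x₁)
        intervalIntegrable_const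
      intro s hs
      have hs' : s ∈ Set.Icc a b := ⟨hs.1, hs.2.trans hx₁.2⟩
      calc deriv u s ≤ c * M * (s - a) := claim1 s hs'
        _ ≤ c * M * (b - a) := by nlinarith [hs.1, hs'.2]
    rw [hFTC, intervalIntegral.integral_const, smul_eq_mul, ha0] at hmono
    have h1 : 0 ≤ c * M * (b - a) := mul_nonneg hcM (by linarith)
    nlinarith [hmono, hx₁.1, hx₁.2, mul_le_mul_of_nonneg_right (show x₁ - a ≤ b - a by linarith [hx₁.2]) h1]
  have hMle : M ≤ 0 := by
    nlinarith [mul_nonneg hM0 (by linarith : (0:ℝ) ≤ 1/2 - c * (b - a)^2)]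
  intro x hx
  exact le_antisymm ((hmax' x hx).trans hMle) (hnn x hx)

lemma zero_on_interval' (c : ℝ) (hc : 0 ≤ c) (u : ℝ → ℝ) (hu : ContDiff ℝ 2 u)
    (a b : ℝ) (hab : a ≤ b) (hlen : c * (b - a) ^ 2 ≤ 1 / 2)
    (hnn : ∀ x ∈ Set.Icc a b, 0 ≤ u x)
    (hineq : ∀ x ∈ Set.Icc a b, deriv (deriv u) x ≤ c * u x)
    (hb0 : u b = 0) (hb1 : deriv u b = 0) :
    ∀ x ∈ Set.Icc a b, u x = 0 := by
  set v : ℝ → ℝ := fun x => u (a + b - x) with hv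
  have hvu : ContDiff ℝ 2 v := hu.comp (contDiff_const.sub contDiff_id)
  have hdv : deriv v = fun x => -deriv u (a + b - x) :=
    funext fun x => deriv_comp_const_sub u (a + b) x
  have hdv2 : ∀ x, deriv (deriv v) x = deriv (deriv u) (a + b - x) := by
    intro x
    rw [hdv]
    have : deriv (fun x => -deriv u (a + b - x)) x
        = -deriv (fun x => deriv u (a + b - x)) x := deriv.neg
    rw [this, deriv_comp_const_sub, neg_neg]
  have hmem : ∀ x ∈ Set.Icc a b, a + b - x ∈ Set.Icc a b := by
    intro x hx; constructor <;> [skip; skip] <;> cases hx with | intro h1 h2 => linarith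
  have hz := zero_on_interval c hc v hvu a b hab hlen
    (fun x hx => hnn _ (hmem x hx))
    (fun x hx => by rw [hdv2]; exact hineq _ (hmem x hx))
    (by simp only [hv]; rw [show a + b - a = b by ring]; exact hb0)
    (by rw [hdv]; simp only []; rw [show a + b - a = b by ring, hb1, neg_zero])
  intro x hx
  have := hz (a + b - x) (hmem x hx)
  simpa only [hv, show a + b - (a + b - x) = x by ring] using this

lemma zero_propagate (c : ℝ) (hc : 0 ≤ c) (u : ℝ → ℝ) (hu : ContDiff ℝ 2 u)
    (hnn : ∀ x, 0 ≤ x → 0 ≤ u x)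
    (hineq : ∀ x, 0 ≤ x → deriv (deriv u) x ≤ c * u x)
    (h0 : deriv u 0 = 0)
    (x₀ : ℝ) (hx₀ : 0 ≤ x₀) (hu0 : u x₀ = 0) :
    ∀ x, 0 ≤ x → u x = 0 := by
  have hz' : ∀ b, 0 ≤ b → u b = 0 → deriv u b = 0 := by
    intro b hb hub
    rcases eq_or_lt_of_le hb with hb | hb
    · rwa [← hb]
    · apply IsLocalMin.deriv_eq_zero
      filter_upwards [Ioi_mem_nhds hb] with x hx
      rw [hub]; exact hnn x hx.le
  set r : ℝ := 1 / (c + 1) with hrdef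
  have hc1 : (0:ℝ) < c + 1 := by linarith
  have hr0 : 0 < r := by positivity
  have hlen : c * r ^ 2 ≤ 1 / 2 := by
    have he : c * r ^ 2 = c / (c + 1) ^ 2 := by rw [hrdef]; field_simp
    rw [he, div_le_iff₀ (by positivity)]
    nlinarith
  have main : ∀ n : ℕ, ∀ x ∈ Set.Icc (max 0 (x₀ - n * r)) (x₀ + n * r), u x = 0 := by
    intro n
    induction n with
    | zero =>
      intro x hx
      simp only [Nat.cast_zero, zero_mul, sub_zero, add_zero, max_eq_right hx₀] at hx
      rw [le_antisymm hx.2 hx.1, hu0]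
    | succ n ih =>
      set a := max 0 (x₀ - n * r) with hadef
      set bb := x₀ + n * r with hbdef
      have hnr : (0:ℝ) ≤ n * r := by positivity
      have haa : 0 ≤ a := le_max_left _ _
      have hax : a ≤ x₀ := max_le hx₀ (by linarith)
      have hxb : x₀ ≤ bb := by rw [hbdef]; linarith
      have hab : a ≤ bb := hax.trans hxb
      have hua : u a = 0 := ih a ⟨le_refl a, hab⟩
      have hub : u bb = 0 := ih bb ⟨hab, le_refl bb⟩
      have hbb0 : 0 ≤ bb := haa.trans hab
      -- forward interval [bb, bb + r]
      have hf := zero_on_interval c hc u hu bb (bb + r) (by linarith)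
        (by rw [show bb + r - bb = r by ring]; exact hlen)
        (fun x hx => hnn x (hbb0.trans hx.1))
        (fun x hx => hineq x (hbb0.trans hx.1))
        hub (hz' bb hbb0 hub)
      -- backward interval [a', a]
      set a' := max 0 (x₀ - (n + 1 : ℕ) * r) with ha'def
      have ha'0 : 0 ≤ a' := le_max_left _ _
      have hcast : ((n + 1 : ℕ) : ℝ) * r = n * r + r := by push_cast; ring
      have ha'a : a' ≤ a := by
        apply max_le_max (le_refl 0)
        linarith [hcast]
      have hlen' : a - a' ≤ r := by
        have h1 : a ≤ a' + r := by
          apply max_le (by linarith)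
          have := le_max_right 0 (x₀ - (n + 1 : ℕ) * r)
          linarith [hcast]
        linarith
      have hsq : (a - a') ^ 2 ≤ r ^ 2 := by nlinarith [sub_nonneg.mpr ha'a]
      have hbk := zero_on_interval' c hc u hu a' a ha'a
        (by nlinarith [mul_le_mul_of_nonneg_left hsq hc])
        (fun x hx => hnn x (ha'0.trans hx.1))
        (fun x hx => hineq x (ha'0.trans hx.1))
        hua (hz' a haa hua)
      intro x hx
      rcases le_total x a with h1 | h1
      · exact hbk x ⟨hx.1, h1⟩
      rcases le_total x bb with h2 | h2
      · exact ih x ⟨h1, h2⟩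
      · exact hf x ⟨h2, by linarith [hx.2, hcast]⟩
  intro x hx
  obtain ⟨n, hn⟩ := exists_nat_ge (max ((x - x₀) / r) (x₀ / r))
  have h1 : x ≤ x₀ + n * r := by
    have := (le_max_left ((x - x₀) / r) (x₀ / r)).trans hn
    rw [div_le_iff₀ hr0] at this; linarith
  have h2 : x₀ - n * r ≤ 0 := by
    have := (le_max_right ((x - x₀) / r) (x₀ / r)).trans hn
    rw [div_le_iff₀ hr0] at this; linarith
  exact main n x ⟨by rw [max_eq_left h2]; exact hx, h1⟩

lemma convexZero (u : ℝ → ℝ) (hu : ContDiff ℝ 2 u)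
    (hnn : ∀ x, 0 ≤ x → 0 ≤ u x)
    (hcc : ∀ x, 0 ≤ x → 0 ≤ deriv (deriv u) x)
    (h0 : deriv u 0 = 0) (hlim : Tendsto u atTop (𝓝 0)) :
    ∀ x, 0 ≤ x → u x = 0 := by
  obtain ⟨hd1, hd2, hcont⟩ := aux_bits hu
  have hm1 : MonotoneOn (deriv u) (Set.Ici 0) := by
    apply monotoneOn_of_deriv_nonneg (convex_Ici 0) hd2.continuous.continuousOn
      (hd2.differentiableOn)
    intro x hx
    rw [interior_Ici] at hx
    exact hcc x hx.le
  have hd1nn : ∀ x ∈ interior (Set.Ici (0:ℝ)), 0 ≤ deriv u x := by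
    intro x hx
    rw [interior_Ici] at hx
    rw [← h0]
    exact hm1 (Set.mem_Ici.mpr (le_refl (0:ℝ))) (Set.mem_Ici.mpr (Set.mem_Ioi.mp hx).le) hx.le
  have hm2 : MonotoneOn u (Set.Ici 0) := monotoneOn_of_deriv_nonneg (convex_Ici 0)
    hd1.continuous.continuousOn hd1.differentiableOn hd1nn
  intro x hx
  refine le_antisymm ?_ (hnn x hx)
  apply ge_of_tendsto hlim
  filter_upwards [eventually_ge_atTop x] with y hy
  exact hm2 hx (hx.trans hy) hy

lemma phi3_bounds (p : Params) (hp : p.Pos) (T : ℝ) (hT : 0 ≤ T) :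
    0 ≤ phi3 p T ∧ phi3 p T ≤ p.ρ 2 := by
  obtain ⟨hk, hk6, hk8, hh, hρ, hD⟩ := hp
  have hρ2 : 0 < p.ρ 2 := hρ 2 (by decide)
  have hd : 0 < p.k 2 * T + p.h 2 := by nlinarith [hk 2, hh 2]
  constructor
  · exact div_nonneg (mul_nonneg (mul_nonneg (hk 2).le hρ2.le) hT) hd.le
  · rw [phi3, div_le_iff₀ hd]; nlinarith [hh 2]

lemma phi7_bounds (p : Params) (hp : p.Pos) (T : ℝ) (hT : 0 ≤ T) :
    0 ≤ phi7 p T ∧ phi7 p T ≤ p.ρ 6 := by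
  obtain ⟨hk, hk6, hk8, hh, hρ, hD⟩ := hp
  have hρ6 : 0 < p.ρ 6 := hρ 6 (by decide)
  have hd : 0 < p.k 6 * T + p.h 6 := by nlinarith [hk 6, hh 6]
  constructor
  · exact div_nonneg (mul_nonneg (mul_nonneg (hk 6).le hρ6.le) hT) hd.le
  · rw [phi7, div_le_iff₀ hd]; nlinarith [hh 6]

lemma phi5_bounds (p : Params) (hp : p.Pos) (T : ℝ) (hT : 0 ≤ T) :
    0 ≤ phi5 p T ∧ phi5 p T ≤ p.ρ 4 := by
  have h7 := phi7_bounds p hp T hT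
  obtain ⟨hk, hk6, hk8, hh, hρ, hD⟩ := hp
  have hρ4 : 0 < p.ρ 4 := hρ 4 (by decide)
  have hd : 0 < p.k 4 * phi7 p T + p.h 4 := by nlinarith [hk 4, hh 4, h7.1]
  constructor
  · exact div_nonneg (mul_nonneg (mul_nonneg (hk 4).le hρ4.le) h7.1) hd.le
  · rw [phi5, div_le_iff₀ hd]; nlinarith [hh 4, h7.1]

lemma phi4_bounds (p : Params) (hp : p.Pos) (T : ℝ) (hT : 0 ≤ T) :
    0 ≤ phi4 p T ∧ phi4 p T ≤ p.ρ 3 := by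
  obtain ⟨hk, hk6, hk8, hh, hρ, hD⟩ := hp
  have hρ3 : 0 < p.ρ 3 := hρ 3 (by decide)
  have hd : 0 < p.k 3 * T + p.h 3 := by nlinarith [hk 3, hh 3]
  constructor
  · exact div_nonneg (mul_nonneg (mul_nonneg (hk 3).le hρ3.le) hT) hd.le
  · rw [phi4, div_le_iff₀ hd]; nlinarith [hh 3]

lemma phi2_nonneg (p : Params) (hp : p.Pos) (T : ℝ) (hT : 0 ≤ T) : 0 ≤ phi2 p T := by
  have h4 := phi4_bounds p hp T hT
  have h5 := phi5_bounds p hp T hT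
  obtain ⟨hk, hk6, hk8, hh, hρ, hD⟩ := hp
  exact mul_nonneg (div_nonneg (hk 1).le (hh 1).le) (mul_nonneg h4.1 h5.1)

lemma phi6_bounds (p : Params) (hp : p.Pos) (T : ℝ) (hT : 0 ≤ T) :
    0 ≤ phi6 p T ∧ phi6 p T ≤ p.ρ 5 := by
  have h5 := phi5_bounds p hp T hT
  have h2 := phi2_nonneg p hp T hT
  obtain ⟨hk, hk6, hk8, hh, hρ, hD⟩ := hp
  have hρ5 : 0 < p.ρ 5 := hρ 5 (by decide)
  have hs : 0 ≤ p.k 5 * phi5 p T + p.kb6 * phi2 p T := by nlinarith [hk 5, h5.1]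
  have hd : 0 < p.k 5 * phi5 p T + p.kb6 * phi2 p T + p.h 5 := by nlinarith [hh 5]
  constructor
  · exact div_nonneg (mul_nonneg hρ5.le hs) hd.le
  · rw [phi6, div_le_iff₀ hd]; nlinarith [hh 5]

lemma phi1_bounds (p : Params) (hp : p.Pos) (T : ℝ) (hT : 0 ≤ T) :
    0 ≤ phi1 p T ∧ phi1 p T ≤ p.k 0 / p.h 0 * (p.ρ 2 * p.ρ 5) := by
  have h3 := phi3_bounds p hp T hT
  have h6 := phi6_bounds p hp T hT
  obtain ⟨hk, hk6, hk8, hh, hρ, hD⟩ := hp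
  have hq : 0 ≤ p.k 0 / p.h 0 := div_nonneg (hk 0).le (hh 0).le
  constructor
  · exact mul_nonneg hq (mul_nonneg h3.1 h6.1)
  · apply mul_le_mul_of_nonneg_left _ hq
    exact mul_le_mul h3.2 h6.2 h6.1 (hρ 2 (by decide)).le

lemma Ppoly_lower (p : Params) (hp : p.Pos) (T : ℝ) (hT : 0 ≤ T) :
    -Ppoly p T ≤ (p.k 7 * p.ρ 5 + p.kb8 * (p.k 0 / p.h 0 * (p.ρ 2 * p.ρ 5)) + p.h 7) * T := by
  have h6 := phi6_bounds p hp T hT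
  have h1 := phi1_bounds p hp T hT
  obtain ⟨hk, hk6, hk8, hh, hρ, hD⟩ := hp
  have hρ7 : 0 < p.ρ 7 := hρ 7 (by decide)
  have hq0 : 0 ≤ p.k 7 * phi6 p T + p.kb8 * phi1 p T := by nlinarith [hk 7, h6.1, h1.1]
  have hq1 : p.k 7 * phi6 p T + p.kb8 * phi1 p T
      ≤ p.k 7 * p.ρ 5 + p.kb8 * (p.k 0 / p.h 0 * (p.ρ 2 * p.ρ 5)) := by
    have := mul_le_mul_of_nonneg_left h6.2 (hk 7).le
    have := mul_le_mul_of_nonneg_left h1.2 hk8.le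
    linarith
  rw [Ppoly]
  nlinarith [mul_le_mul_of_nonneg_right hq1 hT, mul_nonneg hq0 hρ7.le, hh 7]

set_option maxHeartbeats 2000000 in
/-- A nonnegative solution of the pulse equations is either identically zero on `[0,∞)`
or strictly positive there. -/
theorem nonneg_solution_zero_or_pos (p : Params) (hp : p.Pos) (Tb Tm : ℝ)
    (hP : CondP p Tb Tm) (τ₁ : ℝ) (hτ₁ : τ₁ ∈ Set.Ioo (0 : ℝ) 1) (g : ℝ → ℝ)
    (hg : GoodG Tb Tm g) (τ : ℝ) (hτ : τ ∈ Set.Icc (0 : ℝ) 1)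
    (w : ℝ → Fin 8 → ℝ) (hC2 : ∀ i, ContDiff ℝ 2 fun x => w x i)
    (hnn : ∀ i : Fin 8, ∀ x : ℝ, 0 ≤ x → 0 ≤ w x i)
    (heq : ∀ i : Fin 8, ∀ x : ℝ, 0 ≤ x →
      p.D i * deriv (deriv (fun y => w y i)) x + Ftau p τ₁ g τ (w x) i = 0)
    (hb : ∀ i, deriv (fun y => w y i) 0 = 0)
    (hl : ∀ i, Tendsto (fun x => w x i) atTop (𝓝 0)) :
    (∀ x : ℝ, 0 ≤ x → ∀ i, w x i = 0) ∨
      (∀ i : Fin 8, ∀ x : ℝ, 0 ≤ x → 0 < w x i) := by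
  obtain ⟨hk, hk6, hk8, hh, hρ, hD⟩ := hp
  -- uniform bound on the components
  have bdd1 : ∀ i : Fin 8, ∃ Mi : ℝ, ∀ x, 0 ≤ x → w x i ≤ Mi := by
    intro i
    have hcW : Continuous fun x => w x i := (hC2 i).continuous
    have h1 : ∀ᶠ x in atTop, w x i ≤ 1 :=
      (hl i).eventually (eventually_le_nhds one_pos)
    obtain ⟨X, hX⟩ := eventually_atTop.mp h1
    obtain ⟨x₁, hx₁, hmax⟩ := isCompact_Icc.exists_isMaxOn
      (⟨0, le_refl 0, le_max_left 0 X⟩ : (Set.Icc 0 (max 0 X)).Nonempty) hcW.continuousOn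
    refine ⟨max (w x₁ i) 1, fun x hx => ?_⟩
    rcases le_total x (max 0 X) with h | h
    · exact le_trans (hmax ⟨hx, h⟩) (le_max_left _ _)
    · exact le_trans (hX x ((le_max_right 0 X).trans h)) (le_max_right _ _)
  choose Ms hMs using bdd1
  set M : ℝ := max 0 (Finset.univ.sup' Finset.univ_nonempty Ms) with hMdef
  have hM : ∀ (i : Fin 8) (x : ℝ), 0 ≤ x → w x i ≤ M := fun i x hx =>
    (hMs i x hx).trans ((Finset.le_sup' Ms (Finset.mem_univ i)).trans (le_max_right _ _))
  have hM0 : (0:ℝ) ≤ M := le_max_left _ _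
  set CP : ℝ := p.k 7 * p.ρ 5 + p.kb8 * (p.k 0 / p.h 0 * (p.ρ 2 * p.ρ 5)) + p.h 7 with hCPdef
  have hCP : 0 ≤ CP := by
    have h1 : 0 ≤ p.k 0 / p.h 0 := div_nonneg (hk 0).le (hh 0).le
    have h2 := hρ 2 (by decide)
    have h5 := hρ 5 (by decide)
    have := mul_nonneg h1 (mul_nonneg h2.le h5.le)
    rw [hCPdef]
    nlinarith [hk 7, hk8, hh 7, mul_nonneg (hk 7).le h5.le, mul_nonneg hk8.le this]
  -- generic reduction from a bound on -Ftau to a bound on the second derivative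
  have keyineq : ∀ (i : Fin 8) (c₀ : ℝ),
      (∀ x, 0 ≤ x → -Ftau p τ₁ g τ (w x) i ≤ c₀ * w x i) →
      ∀ x, 0 ≤ x → deriv (deriv fun y => w y i) x ≤ c₀ / p.D i * w x i := by
    intro i c₀ hF x hx
    have h := heq i x hx
    have hDi := hD i
    rw [div_mul_eq_mul_div, le_div_iff₀ hDi]
    linarith [hF x hx]
  have hFt : ∀ (v : Fin 8 → ℝ) (i : Fin 8), i ≠ 7 → Ftau p τ₁ g τ v i = Fvec p v i := by
    intro v i hi
    simp [Ftau, hi]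
  -- bounds -Ftau_i ≤ c_i w_i
  have hF0 : ∀ x, 0 ≤ x → -Ftau p τ₁ g τ (w x) 0 ≤ p.h 0 * w x 0 := by
    intro x hx
    rw [hFt (w x) 0 (by decide),
      show Fvec p (w x) 0 = p.k 0 * w x 2 * w x 5 - p.h 0 * w x 0 from rfl]
    nlinarith [mul_nonneg (mul_nonneg (hk 0).le (hnn 2 x hx)) (hnn 5 x hx)]
  have hF1 : ∀ x, 0 ≤ x → -Ftau p τ₁ g τ (w x) 1 ≤ p.h 1 * w x 1 := by
    intro x hx
    rw [hFt (w x) 1 (by decide),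
      show Fvec p (w x) 1 = p.k 1 * w x 3 * w x 4 - p.h 1 * w x 1 from rfl]
    nlinarith [mul_nonneg (mul_nonneg (hk 1).le (hnn 3 x hx)) (hnn 4 x hx)]
  have hF2 : ∀ x, 0 ≤ x → -Ftau p τ₁ g τ (w x) 2 ≤ (p.k 2 * M + p.h 2) * w x 2 := by
    intro x hx
    rw [hFt (w x) 2 (by decide),
      show Fvec p (w x) 2 = p.k 2 * w x 7 * (p.ρ 2 - w x 2) - p.h 2 * w x 2 from rfl]
    nlinarith [mul_nonneg (mul_nonneg (hk 2).le (hnn 7 x hx)) (hρ 2 (by decide)).le,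
      mul_le_mul_of_nonneg_right
        (mul_le_mul_of_nonneg_left (hM 7 x hx) (hk 2).le) (hnn 2 x hx)]
  have hF3 : ∀ x, 0 ≤ x → -Ftau p τ₁ g τ (w x) 3 ≤ (p.k 3 * M + p.h 3) * w x 3 := by
    intro x hx
    rw [hFt (w x) 3 (by decide),
      show Fvec p (w x) 3 = p.k 3 * w x 7 * (p.ρ 3 - w x 3) - p.h 3 * w x 3 from rfl]
    nlinarith [mul_nonneg (mul_nonneg (hk 3).le (hnn 7 x hx)) (hρ 3 (by decide)).le,
      mul_le_mul_of_nonneg_right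
        (mul_le_mul_of_nonneg_left (hM 7 x hx) (hk 3).le) (hnn 3 x hx)]
  have hF4 : ∀ x, 0 ≤ x → -Ftau p τ₁ g τ (w x) 4 ≤ (p.k 4 * M + p.h 4) * w x 4 := by
    intro x hx
    rw [hFt (w x) 4 (by decide),
      show Fvec p (w x) 4 = p.k 4 * w x 6 * (p.ρ 4 - w x 4) - p.h 4 * w x 4 from rfl]
    nlinarith [mul_nonneg (mul_nonneg (hk 4).le (hnn 6 x hx)) (hρ 4 (by decide)).le,
      mul_le_mul_of_nonneg_right
        (mul_le_mul_of_nonneg_left (hM 6 x hx) (hk 4).le) (hnn 4 x hx)]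
  have hF5 : ∀ x, 0 ≤ x → -Ftau p τ₁ g τ (w x) 5
      ≤ ((p.k 5 + p.kb6) * M + p.h 5) * w x 5 := by
    intro x hx
    rw [hFt (w x) 5 (by decide), show Fvec p (w x) 5
      = (p.k 5 * w x 4 + p.kb6 * w x 1) * (p.ρ 5 - w x 5) - p.h 5 * w x 5 from rfl]
    nlinarith [mul_nonneg (add_nonneg (mul_nonneg (hk 5).le (hnn 4 x hx))
        (mul_nonneg hk6.le (hnn 1 x hx))) (hρ 5 (by decide)).le,
      mul_le_mul_of_nonneg_right (add_le_add
        (mul_le_mul_of_nonneg_left (hM 4 x hx) (hk 5).le)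
        (mul_le_mul_of_nonneg_left (hM 1 x hx) hk6.le)) (hnn 5 x hx)]
  have hF6 : ∀ x, 0 ≤ x → -Ftau p τ₁ g τ (w x) 6 ≤ (p.k 6 * M + p.h 6) * w x 6 := by
    intro x hx
    rw [hFt (w x) 6 (by decide),
      show Fvec p (w x) 6 = p.k 6 * w x 7 * (p.ρ 6 - w x 6) - p.h 6 * w x 6 from rfl]
    nlinarith [mul_nonneg (mul_nonneg (hk 6).le (hnn 7 x hx)) (hρ 6 (by decide)).le,
      mul_le_mul_of_nonneg_right
        (mul_le_mul_of_nonneg_left (hM 7 x hx) (hk 6).le) (hnn 6 x hx)]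
  have hF7 : ∀ x, 0 ≤ x → -Ftau p τ₁ g τ (w x) 7
      ≤ ((p.k 7 + p.kb8) * M + p.h 7 + CP) * w x 7 := by
    intro x hx
    have hv7 : 0 ≤ w x 7 := hnn 7 x hx
    have hg0 : 0 ≤ g (w x 7) := hg.2.1 _ hv7
    have hPb : -Ppoly p (w x 7) ≤ CP * w x 7 :=
      Ppoly_lower p ⟨hk, hk6, hk8, hh, hρ, hD⟩ _ hv7
    have hB1nn : 0 ≤ ((p.k 7 + p.kb8) * M + p.h 7) * w x 7 := by
      have : 0 ≤ (p.k 7 + p.kb8) * M :=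
        mul_nonneg (add_nonneg (hk 7).le hk8.le) hM0
      exact mul_nonneg (by nlinarith [hh 7]) hv7
    have hB2nn : 0 ≤ CP * w x 7 := mul_nonneg hCP hv7
    have hFb : -Fvec p (w x) 7 ≤ ((p.k 7 + p.kb8) * M + p.h 7) * w x 7 := by
      rw [show Fvec p (w x) 7
        = (p.k 7 * w x 5 + p.kb8 * w x 0) * (p.ρ 7 - w x 7) - p.h 7 * w x 7 from rfl]
      nlinarith [mul_nonneg (add_nonneg (mul_nonneg (hk 7).le (hnn 5 x hx))
          (mul_nonneg hk8.le (hnn 0 x hx))) (hρ 7 (by decide)).le,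
        mul_le_mul_of_nonneg_right (add_le_add
          (mul_le_mul_of_nonneg_left (hM 5 x hx) (hk 7).le)
          (mul_le_mul_of_nonneg_left (hM 0 x hx) hk8.le)) hv7]
    rw [show Ftau p τ₁ g τ (w x) 7
      = (if τ < τ₁ then (1:ℝ) else (1 - τ) / (1 - τ₁)) * Fvec p (w x) 7 +
        (if τ < τ₁ then (0:ℝ) else (τ - τ₁) / (1 - τ₁)) * Ppoly p (w x 7) +
        (if τ < τ₁ then τ else τ₁) * g (w x 7) from by simp [Ftau]]
    split_ifs with hlt
    · linarith [mul_nonneg hτ.1 hg0]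
    · have h1τ : (0:ℝ) < 1 - τ₁ := by linarith [hτ₁.2]
      have hA0 : 0 ≤ (1 - τ) / (1 - τ₁) := div_nonneg (by linarith [hτ.2]) h1τ.le
      have hA1 : (1 - τ) / (1 - τ₁) ≤ 1 :=
        (div_le_one h1τ).mpr (by linarith [not_lt.mp hlt])
      have hB0 : 0 ≤ (τ - τ₁) / (1 - τ₁) :=
        div_nonneg (by linarith [not_lt.mp hlt]) h1τ.le
      have hB1 : (τ - τ₁) / (1 - τ₁) ≤ 1 := (div_le_one h1τ).mpr (by linarith [hτ.2])
      have c1 : (1 - τ) / (1 - τ₁) * -Fvec p (w x) 7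
          ≤ ((p.k 7 + p.kb8) * M + p.h 7) * w x 7 := by
        calc (1 - τ) / (1 - τ₁) * -Fvec p (w x) 7
            ≤ (1 - τ) / (1 - τ₁) * (((p.k 7 + p.kb8) * M + p.h 7) * w x 7) :=
              mul_le_mul_of_nonneg_left hFb hA0
          _ ≤ 1 * (((p.k 7 + p.kb8) * M + p.h 7) * w x 7) :=
              mul_le_mul_of_nonneg_right hA1 hB1nn
          _ = _ := one_mul _
      have c2 : (τ - τ₁) / (1 - τ₁) * -Ppoly p (w x 7) ≤ CP * w x 7 := by
        calc (τ - τ₁) / (1 - τ₁) * -Ppoly p (w x 7)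
            ≤ (τ - τ₁) / (1 - τ₁) * (CP * w x 7) := mul_le_mul_of_nonneg_left hPb hB0
          _ ≤ 1 * (CP * w x 7) := mul_le_mul_of_nonneg_right hB1 hB2nn
          _ = _ := one_mul _
      have c3 : 0 ≤ τ₁ * g (w x 7) := mul_nonneg hτ₁.1.le hg0
      linarith [c1, c2, c3]
  -- each component is identically zero or everywhere positive
  have dich : ∀ (i : Fin 8) (c : ℝ), 0 ≤ c →
      (∀ x, 0 ≤ x → deriv (deriv fun y => w y i) x ≤ c * w x i) →
      (∀ x, 0 ≤ x → w x i = 0) ∨ (∀ x, 0 ≤ x → 0 < w x i) := by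
    intro i c hc hiq
    by_cases hz : ∃ x, 0 ≤ x ∧ w x i = 0
    · obtain ⟨x₀, hx₀, h0⟩ := hz
      exact Or.inl (zero_propagate c hc _ (hC2 i) (hnn i) hiq (hb i) x₀ hx₀ h0)
    · push_neg at hz
      exact Or.inr fun x hx => (hnn i x hx).lt_of_ne fun h => hz x hx h.symm
  have dichAll : ∀ i : Fin 8,
      (∀ x, 0 ≤ x → w x i = 0) ∨ (∀ x, 0 ≤ x → 0 < w x i) := by
    intro i
    fin_cases i
    · exact dich 0 _ (div_nonneg (hh 0).le (hD 0).le) (keyineq 0 _ hF0)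
    · exact dich 1 _ (div_nonneg (hh 1).le (hD 1).le) (keyineq 1 _ hF1)
    · exact dich 2 _ (div_nonneg (add_nonneg (mul_nonneg (hk 2).le hM0) (hh 2).le)
        (hD 2).le) (keyineq 2 _ hF2)
    · exact dich 3 _ (div_nonneg (add_nonneg (mul_nonneg (hk 3).le hM0) (hh 3).le)
        (hD 3).le) (keyineq 3 _ hF3)
    · exact dich 4 _ (div_nonneg (add_nonneg (mul_nonneg (hk 4).le hM0) (hh 4).le)
        (hD 4).le) (keyineq 4 _ hF4)
    · exact dich 5 _ (div_nonneg (add_nonneg (mul_nonneg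
        (add_nonneg (hk 5).le hk6.le) hM0) (hh 5).le) (hD 5).le) (keyineq 5 _ hF5)
    · exact dich 6 _ (div_nonneg (add_nonneg (mul_nonneg (hk 6).le hM0) (hh 6).le)
        (hD 6).le) (keyineq 6 _ hF6)
    · exact dich 7 _ (div_nonneg (add_nonneg (add_nonneg (mul_nonneg
        (add_nonneg (hk 7).le hk8.le) hM0) (hh 7).le) hCP) (hD 7).le) (keyineq 7 _ hF7)
  have zpt : ∀ (i : Fin 8) (x₀ : ℝ), 0 ≤ x₀ → w x₀ i = 0 → ∀ x, 0 ≤ x → w x i = 0 :=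
    fun i x₀ h1 h2 => (dichAll i).resolve_right fun hp => absurd h2 (hp x₀ h1).ne'
  -- if a component vanishes identically, its reaction term vanishes for x > 0
  have sdz : ∀ i : Fin 8, (∀ x, 0 ≤ x → w x i = 0) →
      ∀ x, 0 < x → Ftau p τ₁ g τ (w x) i = 0 := by
    intro i hZ x hx
    have hde : ∀ y : ℝ, 0 < y → deriv (fun z => w z i) y = 0 := by
      intro y hy
      have hev : (fun z => w z i) =ᶠ[𝓝 y] fun _ => (0:ℝ) := by
        filter_upwards [Ioi_mem_nhds hy] with z hz using hZ z hz.le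
      rw [hev.deriv_eq]
      exact deriv_const y 0
    have hev2 : deriv (fun z => w z i) =ᶠ[𝓝 x] fun _ => (0:ℝ) := by
      filter_upwards [Ioi_mem_nhds hx] with z hz using hde z hz
    have h2 : deriv (deriv fun z => w z i) x = 0 := by
      rw [hev2.deriv_eq]; exact deriv_const x 0
    have h := heq i x hx.le
    rw [h2, mul_zero, zero_add] at h
    exact h
  -- convexity step
  have convstep : ∀ i : Fin 8, (∀ x, 0 ≤ x → Ftau p τ₁ g τ (w x) i ≤ 0) →
      ∀ x, 0 ≤ x → w x i = 0 := by
    intro i hF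
    apply convexZero _ (hC2 i) (hnn i) _ (hb i) (hl i)
    intro x hx
    have h := heq i x hx
    nlinarith [hF x hx, hD i]
  -- propagation towards component 7
  have Z2to7 : (∀ x, 0 ≤ x → w x 2 = 0) → ∀ x, 0 ≤ x → w x 7 = 0 := by
    intro hZ
    have h := sdz 2 hZ 1 one_pos
    rw [hFt (w 1) 2 (by decide),
      show Fvec p (w 1) 2 = p.k 2 * w 1 7 * (p.ρ 2 - w 1 2) - p.h 2 * w 1 2 from rfl,
      hZ 1 zero_le_one] at h
    have h7 : w 1 7 = 0 := by
      refine le_antisymm ?_ (hnn 7 1 zero_le_one)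
      nlinarith [mul_pos (hk 2) (hρ 2 (by decide)), hnn 7 1 zero_le_one]
    exact zpt 7 1 zero_le_one h7
  have Z3to7 : (∀ x, 0 ≤ x → w x 3 = 0) → ∀ x, 0 ≤ x → w x 7 = 0 := by
    intro hZ
    have h := sdz 3 hZ 1 one_pos
    rw [hFt (w 1) 3 (by decide),
      show Fvec p (w 1) 3 = p.k 3 * w 1 7 * (p.ρ 3 - w 1 3) - p.h 3 * w 1 3 from rfl,
      hZ 1 zero_le_one] at h
    have h7 : w 1 7 = 0 := by
      refine le_antisymm ?_ (hnn 7 1 zero_le_one)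
      nlinarith [mul_pos (hk 3) (hρ 3 (by decide)), hnn 7 1 zero_le_one]
    exact zpt 7 1 zero_le_one h7
  have Z6to7 : (∀ x, 0 ≤ x → w x 6 = 0) → ∀ x, 0 ≤ x → w x 7 = 0 := by
    intro hZ
    have h := sdz 6 hZ 1 one_pos
    rw [hFt (w 1) 6 (by decide),
      show Fvec p (w 1) 6 = p.k 6 * w 1 7 * (p.ρ 6 - w 1 6) - p.h 6 * w 1 6 from rfl,
      hZ 1 zero_le_one] at h
    have h7 : w 1 7 = 0 := by
      refine le_antisymm ?_ (hnn 7 1 zero_le_one)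
      nlinarith [mul_pos (hk 6) (hρ 6 (by decide)), hnn 7 1 zero_le_one]
    exact zpt 7 1 zero_le_one h7
  have Z4to7 : (∀ x, 0 ≤ x → w x 4 = 0) → ∀ x, 0 ≤ x → w x 7 = 0 := by
    intro hZ
    have h := sdz 4 hZ 1 one_pos
    rw [hFt (w 1) 4 (by decide),
      show Fvec p (w 1) 4 = p.k 4 * w 1 6 * (p.ρ 4 - w 1 4) - p.h 4 * w 1 4 from rfl,
      hZ 1 zero_le_one] at h
    have h6 : w 1 6 = 0 := by
      refine le_antisymm ?_ (hnn 6 1 zero_le_one)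
      nlinarith [mul_pos (hk 4) (hρ 4 (by decide)), hnn 6 1 zero_le_one]
    exact Z6to7 (zpt 6 1 zero_le_one h6)
  have Z5to7 : (∀ x, 0 ≤ x → w x 5 = 0) → ∀ x, 0 ≤ x → w x 7 = 0 := by
    intro hZ
    have h := sdz 5 hZ 1 one_pos
    rw [hFt (w 1) 5 (by decide), show Fvec p (w 1) 5
      = (p.k 5 * w 1 4 + p.kb6 * w 1 1) * (p.ρ 5 - w 1 5) - p.h 5 * w 1 5 from rfl,
      hZ 1 zero_le_one] at h
    have h4 : w 1 4 = 0 := by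
      refine le_antisymm ?_ (hnn 4 1 zero_le_one)
      nlinarith [mul_pos (hk 5) (hρ 5 (by decide)), hnn 4 1 zero_le_one,
        mul_nonneg (mul_nonneg hk6.le (hnn 1 1 zero_le_one)) (hρ 5 (by decide)).le]
    exact Z4to7 (zpt 4 1 zero_le_one h4)
  have Z1to7 : (∀ x, 0 ≤ x → w x 1 = 0) → ∀ x, 0 ≤ x → w x 7 = 0 := by
    intro hZ
    have h := sdz 1 hZ 1 one_pos
    rw [hFt (w 1) 1 (by decide),
      show Fvec p (w 1) 1 = p.k 1 * w 1 3 * w 1 4 - p.h 1 * w 1 1 from rfl,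
      hZ 1 zero_le_one] at h
    have h34 : w 1 3 = 0 ∨ w 1 4 = 0 := by
      rcases mul_eq_zero.mp (by nlinarith [hk 1] :
          w 1 3 * w 1 4 = 0) with h' | h'
      · exact Or.inl h'
      · exact Or.inr h'
    rcases h34 with h' | h'
    · exact Z3to7 (zpt 3 1 zero_le_one h')
    · exact Z4to7 (zpt 4 1 zero_le_one h')
  have Z0to7 : (∀ x, 0 ≤ x → w x 0 = 0) → ∀ x, 0 ≤ x → w x 7 = 0 := by
    intro hZ
    have h := sdz 0 hZ 1 one_pos
    rw [hFt (w 1) 0 (by decide),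
      show Fvec p (w 1) 0 = p.k 0 * w 1 2 * w 1 5 - p.h 0 * w 1 0 from rfl,
      hZ 1 zero_le_one] at h
    have h25 : w 1 2 = 0 ∨ w 1 5 = 0 := by
      rcases mul_eq_zero.mp (by nlinarith [hk 0] :
          w 1 2 * w 1 5 = 0) with h' | h'
      · exact Or.inl h'
      · exact Or.inr h'
    rcases h25 with h' | h'
    · exact Z2to7 (zpt 2 1 zero_le_one h')
    · exact Z5to7 (zpt 5 1 zero_le_one h')
  -- main case split
  by_cases hpos : ∀ i : Fin 8, ∀ x : ℝ, 0 ≤ x → 0 < w x i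
  · exact Or.inr hpos
  push_neg at hpos
  obtain ⟨i, x₀, hx₀, hle⟩ := hpos
  have h0 : w x₀ i = 0 := le_antisymm hle (hnn i x₀ hx₀)
  have hZi : ∀ x, 0 ≤ x → w x i = 0 := zpt i x₀ hx₀ h0
  have hZ7 : ∀ x, 0 ≤ x → w x 7 = 0 := by
    fin_cases i
    · exact Z0to7 hZi
    · exact Z1to7 hZi
    · exact Z2to7 hZi
    · exact Z3to7 hZi
    · exact Z4to7 hZi
    · exact Z5to7 hZi
    · exact Z6to7 hZi
    · exact hZi
  -- propagate zero of component 7 to all others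
  have hZ2 : ∀ x, 0 ≤ x → w x 2 = 0 := by
    apply convstep 2
    intro x hx
    rw [hFt (w x) 2 (by decide),
      show Fvec p (w x) 2 = p.k 2 * w x 7 * (p.ρ 2 - w x 2) - p.h 2 * w x 2 from rfl,
      hZ7 x hx]
    nlinarith [mul_nonneg (hh 2).le (hnn 2 x hx)]
  have hZ3 : ∀ x, 0 ≤ x → w x 3 = 0 := by
    apply convstep 3
    intro x hx
    rw [hFt (w x) 3 (by decide),
      show Fvec p (w x) 3 = p.k 3 * w x 7 * (p.ρ 3 - w x 3) - p.h 3 * w x 3 from rfl,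
      hZ7 x hx]
    nlinarith [mul_nonneg (hh 3).le (hnn 3 x hx)]
  have hZ6 : ∀ x, 0 ≤ x → w x 6 = 0 := by
    apply convstep 6
    intro x hx
    rw [hFt (w x) 6 (by decide),
      show Fvec p (w x) 6 = p.k 6 * w x 7 * (p.ρ 6 - w x 6) - p.h 6 * w x 6 from rfl,
      hZ7 x hx]
    nlinarith [mul_nonneg (hh 6).le (hnn 6 x hx)]
  have hZ4 : ∀ x, 0 ≤ x → w x 4 = 0 := by
    apply convstep 4
    intro x hx
    rw [hFt (w x) 4 (by decide),
      show Fvec p (w x) 4 = p.k 4 * w x 6 * (p.ρ 4 - w x 4) - p.h 4 * w x 4 from rfl,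
      hZ6 x hx]
    nlinarith [mul_nonneg (hh 4).le (hnn 4 x hx)]
  have hZ1 : ∀ x, 0 ≤ x → w x 1 = 0 := by
    apply convstep 1
    intro x hx
    rw [hFt (w x) 1 (by decide),
      show Fvec p (w x) 1 = p.k 1 * w x 3 * w x 4 - p.h 1 * w x 1 from rfl,
      hZ3 x hx]
    nlinarith [mul_nonneg (hh 1).le (hnn 1 x hx)]
  have hZ5 : ∀ x, 0 ≤ x → w x 5 = 0 := by
    apply convstep 5
    intro x hx
    rw [hFt (w x) 5 (by decide), show Fvec p (w x) 5
      = (p.k 5 * w x 4 + p.kb6 * w x 1) * (p.ρ 5 - w x 5) - p.h 5 * w x 5 from rfl,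
      hZ4 x hx, hZ1 x hx]
    nlinarith [mul_nonneg (hh 5).le (hnn 5 x hx)]
  have hZ0 : ∀ x, 0 ≤ x → w x 0 = 0 := by
    apply convstep 0
    intro x hx
    rw [hFt (w x) 0 (by decide),
      show Fvec p (w x) 0 = p.k 0 * w x 2 * w x 5 - p.h 0 * w x 0 from rfl,
      hZ2 x hx]
    nlinarith [mul_nonneg (hh 0).le (hnn 0 x hx)]
  left
  intro x hx j
  fin_cases j
  · exact hZ0 x hx
  · exact hZ1 x hx
  · exact hZ2 x hx
  · exact hZ3 x hx
  · exact hZ4 x hx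
  · exact hZ5 x hx
  · exact hZ6 x hx
  · exact hZ7 x hx


end
end

section
/- There exists a constant vector q ∈ ℝ⁸ with qᵢ > 0 for every i such that for every τ ∈ [0,1], all eight components of the vector J^τ(0)·q are strictly negative, where J^τ(0) denotes the 8×8 Jacobian matrix of F^τ at the origin. -/
open Filter Topology Matrix
open scoped ENNReal

noncomputable section

@[simp] lemma cons_val_five' {α : Type*} {m : ℕ} (x : α) (u : Fin m.succ.succ.succ.succ.succ → α) :
    Matrix.vecCons x u 5 = Matrix.vecHead (Matrix.vecTail (Matrix.vecTail (Matrix.vecTail (Matrix.vecTail u)))) := rfl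
@[simp] lemma cons_val_six' {α : Type*} {m : ℕ} (x : α) (u : Fin m.succ.succ.succ.succ.succ.succ → α) :
    Matrix.vecCons x u 6 = Matrix.vecHead (Matrix.vecTail (Matrix.vecTail (Matrix.vecTail (Matrix.vecTail (Matrix.vecTail u))))) := rfl
@[simp] lemma cons_val_seven' {α : Type*} {m : ℕ} (x : α) (u : Fin m.succ.succ.succ.succ.succ.succ.succ → α) :
    Matrix.vecCons x u 7 = Matrix.vecHead (Matrix.vecTail (Matrix.vecTail (Matrix.vecTail (Matrix.vecTail (Matrix.vecTail (Matrix.vecTail u)))))) := rfl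

lemma deriv_cmul (c x : ℝ) : deriv (fun t : ℝ => c * t) x = c := by
  simpa using ((hasDerivAt_id x).const_mul c).deriv
lemma deriv_cmulc (c d x : ℝ) : deriv (fun t : ℝ => c * t * d) x = c * d := by
  simpa using (((hasDerivAt_id x).const_mul c).mul_const d).deriv

lemma phi7_zero (p : Params) : phi7 p 0 = 0 := by simp [phi7]
lemma phi4_zero (p : Params) : phi4 p 0 = 0 := by simp [phi4]
lemma phi3_zero (p : Params) : phi3 p 0 = 0 := by simp [phi3]
lemma phi5_zero (p : Params) : phi5 p 0 = 0 := by simp [phi5, phi7_zero]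
lemma phi2_zero (p : Params) : phi2 p 0 = 0 := by simp [phi2, phi4_zero]
lemma phi6_zero (p : Params) : phi6 p 0 = 0 := by simp [phi6, phi5_zero, phi2_zero]
lemma phi1_zero (p : Params) : phi1 p 0 = 0 := by simp [phi1, phi3_zero]

lemma hasDerivAt_phi7 (p : Params) (hp : p.Pos) :
    HasDerivAt (phi7 p) (p.k 6 * p.ρ 6 / p.h 6) 0 := by
  have hnum : HasDerivAt (fun T : ℝ => p.k 6 * p.ρ 6 * T) (p.k 6 * p.ρ 6) 0 := by
    simpa using (hasDerivAt_id (0 : ℝ)).const_mul (p.k 6 * p.ρ 6)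
  have hden : HasDerivAt (fun T : ℝ => p.k 6 * T + p.h 6) (p.k 6) 0 := by
    simpa using ((hasDerivAt_id (0 : ℝ)).const_mul (p.k 6)).add_const (p.h 6)
  have hne : p.k 6 * (0 : ℝ) + p.h 6 ≠ 0 := by simp [(hp.2.2.2.1 6).ne']
  have h := hnum.div hden hne
  unfold phi7
  refine h.congr_deriv ?_
  have h6 := (hp.2.2.2.1 6).ne'
  field_simp
  ring

lemma hasDerivAt_phi4 (p : Params) (hp : p.Pos) :
    HasDerivAt (phi4 p) (p.k 3 * p.ρ 3 / p.h 3) 0 := by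
  have hnum : HasDerivAt (fun T : ℝ => p.k 3 * p.ρ 3 * T) (p.k 3 * p.ρ 3) 0 := by
    simpa using (hasDerivAt_id (0 : ℝ)).const_mul (p.k 3 * p.ρ 3)
  have hden : HasDerivAt (fun T : ℝ => p.k 3 * T + p.h 3) (p.k 3) 0 := by
    simpa using ((hasDerivAt_id (0 : ℝ)).const_mul (p.k 3)).add_const (p.h 3)
  have hne : p.k 3 * (0 : ℝ) + p.h 3 ≠ 0 := by simp [(hp.2.2.2.1 3).ne']
  have h := hnum.div hden hne
  unfold phi4
  refine h.congr_deriv ?_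
  have h3 := (hp.2.2.2.1 3).ne'
  field_simp
  ring

lemma hasDerivAt_phi3 (p : Params) (hp : p.Pos) :
    HasDerivAt (phi3 p) (p.k 2 * p.ρ 2 / p.h 2) 0 := by
  have hnum : HasDerivAt (fun T : ℝ => p.k 2 * p.ρ 2 * T) (p.k 2 * p.ρ 2) 0 := by
    simpa using (hasDerivAt_id (0 : ℝ)).const_mul (p.k 2 * p.ρ 2)
  have hden : HasDerivAt (fun T : ℝ => p.k 2 * T + p.h 2) (p.k 2) 0 := by
    simpa using ((hasDerivAt_id (0 : ℝ)).const_mul (p.k 2)).add_const (p.h 2)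
  have hne : p.k 2 * (0 : ℝ) + p.h 2 ≠ 0 := by simp [(hp.2.2.2.1 2).ne']
  have h := hnum.div hden hne
  unfold phi3
  refine h.congr_deriv ?_
  have h2 := (hp.2.2.2.1 2).ne'
  field_simp
  ring

lemma hasDerivAt_phi5 (p : Params) (hp : p.Pos) :
    HasDerivAt (phi5 p) (p.k 4 * p.ρ 4 * (p.k 6 * p.ρ 6 / p.h 6) / p.h 4) 0 := by
  have H7 := hasDerivAt_phi7 p hp
  have hnum : HasDerivAt (fun T : ℝ => p.k 4 * p.ρ 4 * phi7 p T)
      (p.k 4 * p.ρ 4 * (p.k 6 * p.ρ 6 / p.h 6)) 0 := H7.const_mul _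
  have hden : HasDerivAt (fun T : ℝ => p.k 4 * phi7 p T + p.h 4)
      (p.k 4 * (p.k 6 * p.ρ 6 / p.h 6)) 0 := (H7.const_mul _).add_const _
  have hne : p.k 4 * phi7 p 0 + p.h 4 ≠ 0 := by
    rw [phi7_zero]; simp [(hp.2.2.2.1 4).ne']
  have h := hnum.div hden hne
  unfold phi5
  refine h.congr_deriv ?_
  rw [phi7_zero]
  have h4 := (hp.2.2.2.1 4).ne'
  have h6 := (hp.2.2.2.1 6).ne'
  field_simp
  simp only [mul_zero, zero_mul, zero_add, sub_zero, add_zero]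
  rw [div_eq_iff (pow_ne_zero 2 h4)]
  ring

lemma hasDerivAt_phi2 (p : Params) (hp : p.Pos) :
    HasDerivAt (phi2 p) 0 0 := by
  have h := ((hasDerivAt_phi4 p hp).mul (hasDerivAt_phi5 p hp)).const_mul (p.k 1 / p.h 1)
  unfold phi2
  refine h.congr_deriv ?_
  rw [phi4_zero, phi5_zero]
  ring

lemma hasDerivAt_phi6 (p : Params) (hp : p.Pos) :
    HasDerivAt (phi6 p)
      (p.ρ 5 * (p.k 5 * (p.k 4 * p.ρ 4 * (p.k 6 * p.ρ 6 / p.h 6) / p.h 4)) / p.h 5) 0 := by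
  have H5 := hasDerivAt_phi5 p hp
  have H2 := hasDerivAt_phi2 p hp
  set d5 := p.k 4 * p.ρ 4 * (p.k 6 * p.ρ 6 / p.h 6) / p.h 4 with hd5
  have hnum : HasDerivAt (fun T : ℝ => p.ρ 5 * (p.k 5 * phi5 p T + p.kb6 * phi2 p T))
      (p.ρ 5 * (p.k 5 * d5 + p.kb6 * 0)) 0 :=
    ((H5.const_mul _).add (H2.const_mul _)).const_mul _
  have hden : HasDerivAt (fun T : ℝ => p.k 5 * phi5 p T + p.kb6 * phi2 p T + p.h 5)
      (p.k 5 * d5 + p.kb6 * 0) 0 := ((H5.const_mul _).add (H2.const_mul _)).add_const _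
  have hne : p.k 5 * phi5 p 0 + p.kb6 * phi2 p 0 + p.h 5 ≠ 0 := by
    rw [phi5_zero, phi2_zero]; simp [(hp.2.2.2.1 5).ne']
  have h := hnum.div hden hne
  unfold phi6
  refine h.congr_deriv ?_
  rw [phi5_zero, phi2_zero]
  have h4 := (hp.2.2.2.1 4).ne'
  have h5 := (hp.2.2.2.1 5).ne'
  have h6 := (hp.2.2.2.1 6).ne'
  field_simp
  simp only [mul_zero, zero_mul, zero_add, sub_zero, add_zero]
  rw [div_eq_iff (pow_ne_zero 2 h5)]
  ring

lemma hasDerivAt_phi1 (p : Params) (hp : p.Pos) :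
    HasDerivAt (phi1 p) 0 0 := by
  have h := ((hasDerivAt_phi3 p hp).mul (hasDerivAt_phi6 p hp)).const_mul (p.k 0 / p.h 0)
  unfold phi1
  refine h.congr_deriv ?_
  rw [phi3_zero, phi6_zero]
  ring

lemma hasDerivAt_Ppoly (p : Params) (hp : p.Pos) :
    HasDerivAt (Ppoly p)
      (p.k 7 * p.ρ 7 *
          (p.ρ 5 * (p.k 5 * (p.k 4 * p.ρ 4 * (p.k 6 * p.ρ 6 / p.h 6) / p.h 4)) / p.h 5) -
        p.h 7) 0 := by
  have H6 := hasDerivAt_phi6 p hp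
  have H1 := hasDerivAt_phi1 p hp
  set d6 := p.ρ 5 * (p.k 5 * (p.k 4 * p.ρ 4 * (p.k 6 * p.ρ 6 / p.h 6) / p.h 4)) / p.h 5 with hd6
  have hleft : HasDerivAt (fun T : ℝ => p.k 7 * phi6 p T + p.kb8 * phi1 p T)
      (p.k 7 * d6 + p.kb8 * 0) 0 := (H6.const_mul _).add (H1.const_mul _)
  have hright : HasDerivAt (fun T : ℝ => p.ρ 7 - T) (-1) 0 := by
    simpa using (hasDerivAt_id (0 : ℝ)).const_sub (p.ρ 7)
  have hlin : HasDerivAt (fun T : ℝ => p.h 7 * T) (p.h 7) 0 := by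
    simpa using (hasDerivAt_id (0 : ℝ)).const_mul (p.h 7)
  have h := (hleft.mul hright).sub hlin
  unfold Ppoly
  refine h.congr_deriv ?_
  rw [phi6_zero, phi1_zero]
  ring
lemma pd_Fvec7 (p : Params) (j : Fin 8) :
    pd (Fvec p) 7 j 0 =
      ![p.kb8 * p.ρ 7, 0, 0, 0, 0, p.k 7 * p.ρ 7, 0, -(p.h 7)] j := by
  fin_cases j <;>
    (unfold pd; simp [Fvec, Function.update_apply, deriv_cmul, deriv_cmulc])

lemma pd_row7 (p : Params) (A B C : ℝ) (g : ℝ → ℝ) (Hg : HasDerivAt g 0 0)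
    (Pd : ℝ) (HP : HasDerivAt (Ppoly p) Pd 0) (j : Fin 8) :
    pd (fun v => fun i : Fin 8 => if i = 7 then
        A * Fvec p v 7 + B * Ppoly p (v 7) + C * g (v 7) else Fvec p v i) 7 j 0 =
      A * pd (Fvec p) 7 j 0 + (if j = 7 then B * Pd else 0) := by
  by_cases hj : j = 7
  · subst hj
    unfold pd
    simp only [Pi.zero_apply, if_true]
    trans deriv (fun t : ℝ => A * -(p.h 7 * t) + B * Ppoly p t + C * g t) 0
    · apply Filter.EventuallyEq.deriv_eq
      apply Filter.Eventually.of_forall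
      intro t
      simp [Fvec, Function.update_apply]
    · have h1 : HasDerivAt (fun t : ℝ => -(p.h 7 * t)) (-(p.h 7)) 0 := by
        exact (((hasDerivAt_id (0 : ℝ)).const_mul (p.h 7)).neg).congr_deriv (by simp)
      have hD := ((h1.const_mul A).add (HP.const_mul B)).add (Hg.const_mul C)
      have hD' : HasDerivAt (fun t : ℝ => A * -(p.h 7 * t) + B * Ppoly p t + C * g t)
          (A * -p.h 7 + B * Pd + C * 0) 0 := hD
      rw [hD'.deriv]
      have h77 : deriv (fun t : ℝ => Fvec p (Function.update (0 : Fin 8 → ℝ) 7 t) 7) 0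
          = -(p.h 7) := by
        have := pd_Fvec7 p 7
        unfold pd at this
        simpa using this
      rw [h77]
      ring
  · unfold pd
    simp only [Pi.zero_apply, if_neg hj, add_zero]
    have hu : ∀ t : ℝ, Function.update (0 : Fin 8 → ℝ) j t 7 = 0 := fun t => by
      rw [Function.update_apply, if_neg (Ne.symm hj)]; rfl
    trans deriv (fun t : ℝ => A * Fvec p (Function.update (0 : Fin 8 → ℝ) j t) 7 +
        (B * Ppoly p 0 + C * g 0)) 0
    · apply Filter.EventuallyEq.deriv_eq
      apply Filter.Eventually.of_forall
      intro t
      simp only [hu t, if_true, show ((7:Fin 8) = 7) = True from by simp]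
      ring
    · rw [deriv_add_const, deriv_const_mul_field]
set_option maxHeartbeats 4000000 in
/-- There exists a positive vector `q` with all components of `J^τ(0)·q` strictly negative,
for every `τ ∈ [0,1]`. -/
theorem exists_positive_q (p : Params) (hp : p.Pos) (Tb Tm : ℝ) (hP : CondP p Tb Tm)
    (τ₁ : ℝ) (hτ₁ : τ₁ ∈ Set.Ioo (0 : ℝ) 1) (g : ℝ → ℝ) (hg : GoodG Tb Tm g) :
    ∃ q : Fin 8 → ℝ, (∀ i, 0 < q i) ∧
      ∀ τ ∈ Set.Icc (0 : ℝ) 1, ∀ i : Fin 8,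
        (Jac (Ftau p τ₁ g τ) 0 *ᵥ q) i < 0 := by
  obtain ⟨hk, hkb6, hkb8, hh, hρ, hD⟩ := hp
  have hρ2 : 0 < p.ρ 2 := hρ 2 (by decide)
  have hρ3 : 0 < p.ρ 3 := hρ 3 (by decide)
  have hρ4 : 0 < p.ρ 4 := hρ 4 (by decide)
  have hρ5 : 0 < p.ρ 5 := hρ 5 (by decide)
  have hρ6 : 0 < p.ρ 6 := hρ 6 (by decide)
  have hρ7 : 0 < p.ρ 7 := hρ 7 (by decide)
  -- the derivative of Ppoly at 0
  set Pd : ℝ := p.k 7 * p.ρ 7 *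
      (p.ρ 5 * (p.k 5 * (p.k 4 * p.ρ 4 * (p.k 6 * p.ρ 6 / p.h 6) / p.h 4)) / p.h 5) -
      p.h 7 with hPdDef
  have HP : HasDerivAt (Ppoly p) Pd 0 :=
    hasDerivAt_Ppoly p ⟨hk, hkb6, hkb8, hh, hρ, hD⟩
  have hPdneg : Pd < 0 := by
    have := hP.2.2.2.1
    rwa [HP.deriv] at this
  -- the derivative of g at 0
  have hgev : g =ᶠ[𝓝 (0 : ℝ)] fun _ => 0 := by
    filter_upwards [Iio_mem_nhds hP.1] with x hx
    by_contra hgx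
    have hxsupp : x ∈ tsupport g := subset_tsupport g hgx
    exact absurd (hg.2.2 hxsupp).1 (by simpa using hx.le)
  have Hg : HasDerivAt g 0 0 :=
    (hasDerivAt_const (0 : ℝ) (0 : ℝ)).congr_of_eventuallyEq hgev
  -- choice of ε
  set f : ℝ → ℝ := fun ε =>
    p.kb8 * p.ρ 7 * ε +
      p.k 7 * p.ρ 7 *
        ((p.k 5 * p.ρ 5 * (p.k 4 * p.ρ 4 * (p.k 6 * p.ρ 6 / p.h 6 + ε) / p.h 4 + ε) +
            p.kb6 * p.ρ 5 * ε) / p.h 5 + ε) - p.h 7 with hfDef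
  have hf0 : f 0 < 0 := by
    have hfeq : f 0 = Pd := by
      rw [hfDef, hPdDef]
      ring
    rwa [hfeq]
  have hcont : ContinuousAt f 0 := by fun_prop
  have hev : ∀ᶠ ε in 𝓝[>] (0 : ℝ), f ε < 0 :=
    (hcont.tendsto.eventually_lt_const hf0).filter_mono nhdsWithin_le_nhds
  obtain ⟨ε, hfε, hε⟩ := (hev.and eventually_mem_nhdsWithin).exists
  rw [Set.mem_Ioi] at hε
  -- the vector q
  set a : ℝ := p.k 6 * p.ρ 6 / p.h 6 + ε with haDef
  set b : ℝ := p.k 4 * p.ρ 4 * a / p.h 4 + ε with hbDef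
  set c : ℝ := (p.k 5 * p.ρ 5 * b + p.kb6 * p.ρ 5 * ε) / p.h 5 + ε with hcDef
  have ha : 0 < a := by
    have := div_pos (mul_pos (hk 6) hρ6) (hh 6); rw [haDef]; linarith
  have hb : 0 < b := by
    have := div_pos (mul_pos (mul_pos (hk 4) hρ4) ha) (hh 4); rw [hbDef]; linarith
  have hc : 0 < c := by
    have h1 : 0 < p.k 5 * p.ρ 5 * b + p.kb6 * p.ρ 5 * ε :=
      add_pos (mul_pos (mul_pos (hk 5) hρ5) hb) (mul_pos (mul_pos hkb6 hρ5) hε)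
    have := div_pos h1 (hh 5); rw [hcDef]; linarith
  refine ⟨![ε, ε, p.k 2 * p.ρ 2 / p.h 2 + 1, p.k 3 * p.ρ 3 / p.h 3 + 1, b, c, a, 1],
      ?_, ?_⟩
  · intro i
    fin_cases i <;> simp [hε, ha, hb, hc]
    · have := div_pos (mul_pos (hk 2) hρ2) (hh 2); linarith
    · have := div_pos (mul_pos (hk 3) hρ3) (hh 3); linarith
  intro τ hτ i
  have hτ11 : (0 : ℝ) < 1 - τ₁ := by linarith [hτ₁.2]
  have hfc : p.kb8 * p.ρ 7 * ε + p.k 7 * p.ρ 7 * c - p.h 7 < 0 := by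
    simp only [hfDef] at hfε
    rw [hcDef, hbDef, haDef]
    exact hfε
  fin_cases i
  -- rows 0-6 : pure Fvec rows
  · simp only [Matrix.mulVec, dotProduct, Fin.sum_univ_eight, Jac, pd]
    simp [Ftau, Fvec, Function.update_apply, deriv_cmul, deriv_cmulc]
    exact mul_pos (hh 0) hε
  · simp only [Matrix.mulVec, dotProduct, Fin.sum_univ_eight, Jac, pd]
    simp [Ftau, Fvec, Function.update_apply, deriv_cmul, deriv_cmulc]
    exact mul_pos (hh 1) hε
  · simp only [Matrix.mulVec, dotProduct, Fin.sum_univ_eight, Jac, pd]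
    simp [Ftau, Fvec, Function.update_apply, deriv_cmul, deriv_cmulc]
    have e : p.h 2 * (p.k 2 * p.ρ 2 / p.h 2 + 1) = p.k 2 * p.ρ 2 + p.h 2 := by
      field_simp [(hh 2).ne']
    rw [e]; linarith [hh 2]
  · simp only [Matrix.mulVec, dotProduct, Fin.sum_univ_eight, Jac, pd]
    simp [Ftau, Fvec, Function.update_apply, deriv_cmul, deriv_cmulc]
    have e : p.h 3 * (p.k 3 * p.ρ 3 / p.h 3 + 1) = p.k 3 * p.ρ 3 + p.h 3 := by
      field_simp [(hh 3).ne']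
    rw [e]; linarith [hh 3]
  · simp only [Matrix.mulVec, dotProduct, Fin.sum_univ_eight, Jac, pd]
    simp [Ftau, Fvec, Function.update_apply, deriv_cmul, deriv_cmulc]
    have e : p.h 4 * b = p.k 4 * p.ρ 4 * a + p.h 4 * ε := by
      rw [hbDef]; field_simp [(hh 4).ne']
    rw [e]; nlinarith [mul_pos (hh 4) hε]
  · simp only [Matrix.mulVec, dotProduct, Fin.sum_univ_eight, Jac, pd]
    simp [Ftau, Fvec, Function.update_apply, deriv_cmul, deriv_cmulc]
    have e : p.h 5 * c = p.k 5 * p.ρ 5 * b + p.kb6 * p.ρ 5 * ε + p.h 5 * ε := by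
      rw [hcDef]; field_simp [(hh 5).ne']
    rw [e]; nlinarith [mul_pos (hh 5) hε]
  · simp only [Matrix.mulVec, dotProduct, Fin.sum_univ_eight, Jac, pd]
    simp [Ftau, Fvec, Function.update_apply, deriv_cmul, deriv_cmulc]
    have e : p.h 6 * a = p.k 6 * p.ρ 6 + p.h 6 * ε := by
      rw [haDef]; field_simp [(hh 6).ne']
    rw [e]; nlinarith [mul_pos (hh 6) hε]
  · -- row 7
    show (Jac (Ftau p τ₁ g τ) 0 *ᵥ _) (7 : Fin 8) < 0
    by_cases hcase : τ < τ₁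
    · have hJ : ∀ j : Fin 8, Jac (Ftau p τ₁ g τ) 0 7 j
          = 1 * pd (Fvec p) 7 j 0 + (if j = 7 then (0:ℝ) * Pd else 0) := by
        intro j
        have hFtau : Ftau p τ₁ g τ = (fun v => fun i : Fin 8 => if i = 7 then
            (1:ℝ) * Fvec p v 7 + (0:ℝ) * Ppoly p (v 7) + τ * g (v 7)
            else Fvec p v i) := by
          funext v i
          simp only [Ftau, if_pos hcase]
        rw [show Jac (Ftau p τ₁ g τ) 0 7 j = pd (Ftau p τ₁ g τ) 7 j 0 from rfl, hFtau]
        exact pd_row7 p 1 0 τ g Hg Pd HP j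
      simp only [Matrix.mulVec, dotProduct, Fin.sum_univ_eight, hJ]
      norm_num [pd_Fvec7 p, Matrix.cons_val_two, Matrix.cons_val_three, Matrix.cons_val_four]
      linarith [hfc]
    · have hJ : ∀ j : Fin 8, Jac (Ftau p τ₁ g τ) 0 7 j
          = (1 - τ) / (1 - τ₁) * pd (Fvec p) 7 j 0 +
            (if j = 7 then (τ - τ₁) / (1 - τ₁) * Pd else 0) := by
        intro j
        have hFtau : Ftau p τ₁ g τ = (fun v => fun i : Fin 8 => if i = 7 then
            (1 - τ) / (1 - τ₁) * Fvec p v 7 + (τ - τ₁) / (1 - τ₁) * Ppoly p (v 7) +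
              τ₁ * g (v 7)
            else Fvec p v i) := by
          funext v i
          simp only [Ftau, if_neg hcase]
        rw [show Jac (Ftau p τ₁ g τ) 0 7 j = pd (Ftau p τ₁ g τ) 7 j 0 from rfl, hFtau]
        exact pd_row7 p _ _ _ g Hg Pd HP j
      simp only [Matrix.mulVec, dotProduct, Fin.sum_univ_eight, hJ]
      norm_num [pd_Fvec7 p, Matrix.cons_val_two, Matrix.cons_val_three, Matrix.cons_val_four]
      simp only [if_neg (show (0 : Fin 8) ≠ 7 from by decide),
        if_neg (show (1 : Fin 8) ≠ 7 from by decide),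
        if_neg (show (2 : Fin 8) ≠ 7 from by decide),
        if_neg (show (3 : Fin 8) ≠ 7 from by decide),
        if_neg (show (4 : Fin 8) ≠ 7 from by decide),
        if_neg (show (5 : Fin 8) ≠ 7 from by decide),
        if_neg (show (6 : Fin 8) ≠ 7 from by decide), if_pos rfl]
      norm_num

      have hα0 : 0 ≤ (1 - τ) / (1 - τ₁) := div_nonneg (by linarith [hτ.2]) hτ11.le
      have hβ0 : 0 ≤ (τ - τ₁) / (1 - τ₁) :=
        div_nonneg (by linarith [not_lt.mp hcase]) hτ11.le
      rcases eq_or_lt_of_le hα0 with hA | hA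
      · have hτ1 : τ = 1 := by
          have h0 : (1 - τ) / (1 - τ₁) = 0 := hA.symm
          rw [div_eq_zero_iff, or_iff_left hτ11.ne'] at h0
          linarith
        subst hτ1
        rw [← hA, div_self hτ11.ne']
        nlinarith [hPdneg]
      · have h1 : (1 - τ) / (1 - τ₁) * (p.kb8 * p.ρ 7 * ε + p.k 7 * p.ρ 7 * c - p.h 7) < 0 :=
          mul_neg_of_pos_of_neg hA hfc
        have h2 : (τ - τ₁) / (1 - τ₁) * Pd ≤ 0 :=
          mul_nonpos_of_nonneg_of_nonpos hβ0 hPdneg.le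
        nlinarith [h1, h2]

end
end
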